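/- Let k ≥ 2 be an integer, a = π/k, and let q : (0,π) → ℂ be any function, with W_{0,1} the associated function. Then for every x ∈ (0,a): if k is odd (so k ≥ 3), q(x) = W_{0,1}(x) + ∑_{j=1}^{(k−1)/2} ( W_{0,1}(2ja + x) − W_{0,1}(2ja − x) ); and if k is even, q(x) = ∑_{j=1}^{k/2} ( W_{0,1}((2j−1)a + x) − W_{0,1}((2j−1)a − x) ). -/
import Mathlib


/-- The function `W_{0,1}` associated with `q`, where `a = π/k`. -/
noncomputable def W01 (k : ℕ) (q : ℝ → ℂ) (t : ℝ) : ℂ :=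
  let a := Real.pi / k
  if t ∈ Set.Ioo 0 a then
    (q (((k : ℝ) - 1) * a + t) - q (((k : ℝ) - 1) * a - t)) / 2
  else if t ∈ Set.Ioo a (((k : ℝ) - 1) * a) then
    (q (((k : ℝ) + 1) * a - t) - q (((k : ℝ) - 1) * a - t)) / 2
  else if t ∈ Set.Ioo (((k : ℝ) - 1) * a) Real.pi then
    (q (((k : ℝ) + 1) * a - t) + q (t - ((k : ℝ) - 1) * a)) / 2
  else 0

lemma W01_b1 (k : ℕ) (q : ℝ → ℂ) (t : ℝ) (ht : t ∈ Set.Ioo 0 (Real.pi / k)) :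
    W01 k q t = (q (((k : ℝ) - 1) * (Real.pi / k) + t) - q (((k : ℝ) - 1) * (Real.pi / k) - t)) / 2 := by
  simp only [W01]
  rw [if_pos ht]

lemma W01_b2 (k : ℕ) (q : ℝ → ℂ) (t : ℝ)
    (ht : t ∈ Set.Ioo (Real.pi / k) (((k : ℝ) - 1) * (Real.pi / k))) :
    W01 k q t = (q (((k : ℝ) + 1) * (Real.pi / k) - t) - q (((k : ℝ) - 1) * (Real.pi / k) - t)) / 2 := by
  have hk0 : 0 ≤ Real.pi / k := by positivity
  have h1 : t ∉ Set.Ioo (0:ℝ) (Real.pi / k) := by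
    intro h; exact absurd h.2 (not_lt.2 (le_of_lt ht.1))
  simp only [W01]
  rw [if_neg h1, if_pos ht]

lemma W01_b3 (k : ℕ) (hk : 2 ≤ k) (q : ℝ → ℂ) (t : ℝ)
    (ht : t ∈ Set.Ioo (((k : ℝ) - 1) * (Real.pi / k)) Real.pi) :
    W01 k q t = (q (((k : ℝ) + 1) * (Real.pi / k) - t) + q (t - ((k : ℝ) - 1) * (Real.pi / k))) / 2 := by
  have ha : 0 < Real.pi / k := by positivity
  have hka : Real.pi / k ≤ ((k : ℝ) - 1) * (Real.pi / k) := by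
    have : (1:ℝ) ≤ (k:ℝ) - 1 := by
      have : (2:ℝ) ≤ (k:ℝ) := by exact_mod_cast hk
      linarith
    nlinarith
  have h1 : t ∉ Set.Ioo (0:ℝ) (Real.pi / k) := by
    intro h; exact absurd h.2 (not_lt.2 (le_trans hka (le_of_lt ht.1)))
  have h2 : t ∉ Set.Ioo (Real.pi / k) (((k : ℝ) - 1) * (Real.pi / k)) := by
    intro h; exact absurd h.2 (not_lt.2 (le_of_lt ht.1))
  simp only [W01]
  rw [if_neg h1, if_neg h2, if_pos ht]

lemma pt_plus (k : ℕ) (hk : 2 ≤ k) (q : ℝ → ℂ) (x : ℝ) (hx1 : 0 < x) (hx2 : x < Real.pi / k)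
    (m : ℝ) (hm1 : 1 ≤ m) (hm2 : m ≤ (k:ℝ) - 2) :
    W01 k q (m * (Real.pi / k) + x) =
      (q (((k:ℝ) + 1 - m) * (Real.pi / k) - x) - q (((k:ℝ) - 1 - m) * (Real.pi / k) - x)) / 2 := by
  have hk0 : (0:ℝ) < k := by exact_mod_cast Nat.lt_of_lt_of_le two_pos hk
  have ha : 0 < Real.pi / k := div_pos Real.pi_pos hk0
  rw [W01_b2 k q _ ⟨by nlinarith, by nlinarith⟩]
  congr 2 <;> ring

lemma pt_minus (k : ℕ) (hk : 2 ≤ k) (q : ℝ → ℂ) (x : ℝ) (hx1 : 0 < x) (hx2 : x < Real.pi / k)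
    (m : ℝ) (hm1 : 2 ≤ m) (hm2 : m ≤ (k:ℝ) - 1) :
    W01 k q (m * (Real.pi / k) - x) =
      (q (((k:ℝ) + 1 - m) * (Real.pi / k) + x) - q (((k:ℝ) - 1 - m) * (Real.pi / k) + x)) / 2 := by
  have hk0 : (0:ℝ) < k := by exact_mod_cast Nat.lt_of_lt_of_le two_pos hk
  have ha : 0 < Real.pi / k := div_pos Real.pi_pos hk0
  rw [W01_b2 k q _ ⟨by nlinarith, by nlinarith⟩]
  congr 2 <;> ring

lemma pt_top (k : ℕ) (hk : 2 ≤ k) (q : ℝ → ℂ) (x : ℝ) (hx1 : 0 < x) (hx2 : x < Real.pi / k) :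
    W01 k q (((k:ℝ) - 1) * (Real.pi / k) + x) =
    (q (2 * (Real.pi / k) - x) + q x) / 2 := by
  have hk0 : (0:ℝ) < k := by exact_mod_cast Nat.lt_of_lt_of_le two_pos hk
  have ha : 0 < Real.pi / k := div_pos Real.pi_pos hk0
  have hk2 : (2:ℝ) ≤ (k:ℝ) := by exact_mod_cast hk
  have hkpi : (k:ℝ) * (Real.pi / k) = Real.pi := by
    field_simp
  rw [W01_b3 k hk q _ ⟨by nlinarith, by nlinarith [hkpi]⟩]
  congr 2 <;> ring

lemma pt_bot (k : ℕ) (hk : 2 ≤ k) (q : ℝ → ℂ) (x : ℝ) (hx1 : 0 < x) (hx2 : x < Real.pi / k) :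
    W01 k q ((Real.pi / k) - x) =
    (q ((k:ℝ) * (Real.pi / k) - x) - q (((k:ℝ) - 2) * (Real.pi / k) + x)) / 2 := by
  rw [W01_b1 k q _ ⟨by linarith, by linarith⟩]
  congr 2 <;> ring

lemma pt_base (k : ℕ) (q : ℝ → ℂ) (x : ℝ) (hx1 : 0 < x) (hx2 : x < Real.pi / k) :
    W01 k q x =
    (q (((k:ℝ) - 1) * (Real.pi / k) + x) - q (((k:ℝ) - 1) * (Real.pi / k) - x)) / 2 :=
  W01_b1 k q x ⟨hx1, hx2⟩

theorem q_from_W01 (k : ℕ) (hk : 2 ≤ k) (q : ℝ → ℂ) :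
    ∀ x ∈ Set.Ioo (0:ℝ) (Real.pi / k),
      (Odd k →
        q x = W01 k q x + ∑ j ∈ Finset.Icc 1 ((k - 1) / 2),
          (W01 k q (2 * j * (Real.pi / k) + x) - W01 k q (2 * j * (Real.pi / k) - x))) ∧
      (Even k →
        q x = ∑ j ∈ Finset.Icc 1 (k / 2),
          (W01 k q ((2 * (j : ℝ) - 1) * (Real.pi / k) + x) -
            W01 k q ((2 * (j : ℝ) - 1) * (Real.pi / k) - x))) := by
  rintro x ⟨hx1, hx2⟩
  constructor
  · -- odd case
    rintro ⟨r, hr⟩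
    have hr1 : 1 ≤ r := by omega
    obtain ⟨s, hs⟩ : ∃ s, r = s + 1 := ⟨r - 1, by omega⟩
    have hicc : (k - 1) / 2 = r := by omega
    have hkr : (k:ℝ) = 2 * (r:ℝ) + 1 := by
      have : k = 2 * r + 1 := by omega
      rw [this]; push_cast; ring
    rw [hicc, Finset.sum_sub_distrib]
    have S2 : (∑ j ∈ Finset.Icc 1 r, W01 k q (2 * (j:ℝ) * (Real.pi / k) - x))
        = q (((k:ℝ) - 1) * (Real.pi / k) + x) / 2 - q x / 2 := by
      rw [← Finset.Ico_add_one_right_eq_Icc, Finset.sum_Ico_eq_sum_range]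

      refine Eq.trans (Finset.sum_congr rfl fun i hi => ?_)
        (Eq.trans (Finset.sum_range_sub'
          (fun n : ℕ => q (((k:ℝ) - 1 - 2 * (n:ℝ)) * (Real.pi / k) + x) / 2) r) ?_)
      · simp only [Finset.mem_range] at hi
        have hi' : (i:ℝ) + 1 ≤ (r:ℝ) := by exact_mod_cast hi
        rw [pt_minus k hk q x hx1 hx2 (2 * ((1 + i : ℕ):ℝ))
          (by push_cast; linarith) (by rw [hkr]; push_cast; linarith)]
        show _ = q (((k:ℝ) - 1 - 2 * ((i:ℕ):ℝ)) * (Real.pi / k) + x) / 2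
          - q (((k:ℝ) - 1 - 2 * ((i + 1 : ℕ):ℝ)) * (Real.pi / k) + x) / 2
        have e1 : (k:ℝ) + 1 - 2 * ((1 + i : ℕ):ℝ) = (k:ℝ) - 1 - 2 * ((i:ℕ):ℝ) := by
          push_cast; ring
        have e2 : (k:ℝ) - 1 - 2 * ((1 + i : ℕ):ℝ) = (k:ℝ) - 1 - 2 * ((i + 1 : ℕ):ℝ) := by
          push_cast; ring
        rw [e1, e2]; ring
      · show q (((k:ℝ) - 1 - 2 * ((0:ℕ):ℝ)) * (Real.pi / k) + x) / 2
          - q (((k:ℝ) - 1 - 2 * ((r:ℕ):ℝ)) * (Real.pi / k) + x) / 2 = _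
        have e3 : (k:ℝ) - 1 - 2 * ((0:ℕ):ℝ) = (k:ℝ) - 1 := by push_cast; ring
        have e4 : ((k:ℝ) - 1 - 2 * ((r:ℕ):ℝ)) * (Real.pi / k) + x = x := by
          rw [hkr]; ring
        rw [e3, e4]
    have S1 : (∑ j ∈ Finset.Icc 1 r, W01 k q (2 * (j:ℝ) * (Real.pi / k) + x))
        = q (((k:ℝ) - 1) * (Real.pi / k) - x) / 2 - q (2 * (Real.pi / k) - x) / 2
          + (q (2 * (Real.pi / k) - x) + q x) / 2 := by
      rw [hs, Finset.sum_Icc_succ_top (by omega)]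
      have htop : (2 : ℝ) * ((s + 1 : ℕ):ℝ) = (k:ℝ) - 1 := by
        rw [hkr, hs]; push_cast; ring
      rw [htop, pt_top k hk q x hx1 hx2]
      congr 1
      rw [← Finset.Ico_add_one_right_eq_Icc, Finset.sum_Ico_eq_sum_range]

      refine Eq.trans (Finset.sum_congr rfl fun i hi => ?_)
        (Eq.trans (Finset.sum_range_sub'
          (fun n : ℕ => q (((k:ℝ) - 1 - 2 * (n:ℝ)) * (Real.pi / k) - x) / 2) s) ?_)
      · simp only [Finset.mem_range] at hi
        have hi' : (i:ℝ) + 1 ≤ (s:ℝ) := by exact_mod_cast hi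
        have hks : (k:ℝ) = 2 * (s:ℝ) + 3 := by rw [hkr, hs]; push_cast; ring
        rw [pt_plus k hk q x hx1 hx2 (2 * ((1 + i : ℕ):ℝ))
          (by push_cast; linarith) (by rw [hks]; push_cast; linarith)]
        show _ = q (((k:ℝ) - 1 - 2 * ((i:ℕ):ℝ)) * (Real.pi / k) - x) / 2
          - q (((k:ℝ) - 1 - 2 * ((i + 1 : ℕ):ℝ)) * (Real.pi / k) - x) / 2
        have e1 : (k:ℝ) + 1 - 2 * ((1 + i : ℕ):ℝ) = (k:ℝ) - 1 - 2 * ((i:ℕ):ℝ) := by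
          push_cast; ring
        have e2 : (k:ℝ) - 1 - 2 * ((1 + i : ℕ):ℝ) = (k:ℝ) - 1 - 2 * ((i + 1 : ℕ):ℝ) := by
          push_cast; ring
        rw [e1, e2]; ring
      · show q (((k:ℝ) - 1 - 2 * ((0:ℕ):ℝ)) * (Real.pi / k) - x) / 2
          - q (((k:ℝ) - 1 - 2 * ((s:ℕ):ℝ)) * (Real.pi / k) - x) / 2 = _
        have e3 : (k:ℝ) - 1 - 2 * ((0:ℕ):ℝ) = (k:ℝ) - 1 := by push_cast; ring
        have e4 : (k:ℝ) - 1 - 2 * ((s:ℕ):ℝ) = 2 := by rw [hkr, hs]; push_cast; ring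
        rw [e3, e4]
    rw [S1, S2, pt_base k q x hx1 hx2]
    ring
  · -- even case
    rintro hke
    obtain ⟨r, hr⟩ := hke
    have hr1 : 1 ≤ r := by omega
    obtain ⟨s, hs⟩ : ∃ s, r = s + 1 := ⟨r - 1, by omega⟩
    have hicc : k / 2 = r := by omega
    have hkr : (k:ℝ) = 2 * (r:ℝ) := by
      have : k = 2 * r := by omega
      rw [this]; push_cast; ring
    rw [hicc, Finset.sum_sub_distrib]
    have S1 : (∑ j ∈ Finset.Icc 1 r, W01 k q ((2 * (j:ℝ) - 1) * (Real.pi / k) + x))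
        = q ((k:ℝ) * (Real.pi / k) - x) / 2 - q (2 * (Real.pi / k) - x) / 2
          + (q (2 * (Real.pi / k) - x) + q x) / 2 := by
      rw [hs, Finset.sum_Icc_succ_top (by omega)]
      have htop : (2 : ℝ) * ((s + 1 : ℕ):ℝ) - 1 = (k:ℝ) - 1 := by
        rw [hkr, hs]
      rw [htop, pt_top k hk q x hx1 hx2]
      congr 1
      rw [← Finset.Ico_add_one_right_eq_Icc, Finset.sum_Ico_eq_sum_range]

      refine Eq.trans (Finset.sum_congr rfl fun i hi => ?_)
        (Eq.trans (Finset.sum_range_sub'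
          (fun n : ℕ => q (((k:ℝ) - 2 * (n:ℝ)) * (Real.pi / k) - x) / 2) s) ?_)
      · simp only [Finset.mem_range] at hi
        have hi' : (i:ℝ) + 1 ≤ (s:ℝ) := by exact_mod_cast hi
        have hks : (k:ℝ) = 2 * (s:ℝ) + 2 := by rw [hkr, hs]; push_cast; ring
        rw [pt_plus k hk q x hx1 hx2 (2 * ((1 + i : ℕ):ℝ) - 1)
          (by push_cast; linarith) (by rw [hks]; push_cast; linarith)]
        show _ = q (((k:ℝ) - 2 * ((i:ℕ):ℝ)) * (Real.pi / k) - x) / 2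
          - q (((k:ℝ) - 2 * ((i + 1 : ℕ):ℝ)) * (Real.pi / k) - x) / 2
        have e1 : (k:ℝ) + 1 - (2 * ((1 + i : ℕ):ℝ) - 1) = (k:ℝ) - 2 * ((i:ℕ):ℝ) := by
          push_cast; ring
        have e2 : (k:ℝ) - 1 - (2 * ((1 + i : ℕ):ℝ) - 1) = (k:ℝ) - 2 * ((i + 1 : ℕ):ℝ) := by
          push_cast; ring
        rw [e1, e2]; ring
      · show q (((k:ℝ) - 2 * ((0:ℕ):ℝ)) * (Real.pi / k) - x) / 2
          - q (((k:ℝ) - 2 * ((s:ℕ):ℝ)) * (Real.pi / k) - x) / 2 = _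
        have e3 : (k:ℝ) - 2 * ((0:ℕ):ℝ) = (k:ℝ) := by push_cast; ring
        have e4 : (k:ℝ) - 2 * ((s:ℕ):ℝ) = 2 := by rw [hkr, hs]; push_cast; ring
        rw [e3, e4]
    have S2 : (∑ j ∈ Finset.Icc 1 r, W01 k q ((2 * (j:ℝ) - 1) * (Real.pi / k) - x))
        = (q ((k:ℝ) * (Real.pi / k) - x) - q (((k:ℝ) - 2) * (Real.pi / k) + x)) / 2
          + (q (((k:ℝ) - 2) * (Real.pi / k) + x) / 2 - q x / 2) := by
      have hsplit : Finset.Icc 1 r = insert 1 (Finset.Icc 2 r) := by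
        ext a; simp only [Finset.mem_Icc, Finset.mem_insert]; omega
      rw [hsplit, Finset.sum_insert (by simp)]
      have hb : (2 * ((1:ℕ):ℝ) - 1) * (Real.pi / k) - x = (Real.pi / k) - x := by
        push_cast; ring
      rw [hb, pt_bot k hk q x hx1 hx2]
      congr 1
      rw [← Finset.Ico_add_one_right_eq_Icc, Finset.sum_Ico_eq_sum_range]
      have hrs : r + 1 - 2 = s := by omega
      rw [hrs]
      refine Eq.trans (Finset.sum_congr rfl fun i hi => ?_)
        (Eq.trans (Finset.sum_range_sub'
          (fun n : ℕ => q (((k:ℝ) - 2 * ((n:ℝ) + 1)) * (Real.pi / k) + x) / 2) s) ?_)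
      · simp only [Finset.mem_range] at hi
        have hi' : (i:ℝ) + 1 ≤ (s:ℝ) := by exact_mod_cast hi
        have hks : (k:ℝ) = 2 * (s:ℝ) + 2 := by rw [hkr, hs]; push_cast; ring
        rw [pt_minus k hk q x hx1 hx2 (2 * ((2 + i : ℕ):ℝ) - 1)
          (by push_cast; linarith) (by rw [hks]; push_cast; linarith)]
        show _ = q (((k:ℝ) - 2 * (((i:ℕ):ℝ) + 1)) * (Real.pi / k) + x) / 2
          - q (((k:ℝ) - 2 * (((i + 1 : ℕ):ℝ) + 1)) * (Real.pi / k) + x) / 2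
        have e1 : (k:ℝ) + 1 - (2 * ((2 + i : ℕ):ℝ) - 1) = (k:ℝ) - 2 * (((i:ℕ):ℝ) + 1) := by
          push_cast; ring
        have e2 : (k:ℝ) - 1 - (2 * ((2 + i : ℕ):ℝ) - 1)
            = (k:ℝ) - 2 * (((i + 1 : ℕ):ℝ) + 1) := by
          push_cast; ring
        rw [e1, e2]; ring
      · show q (((k:ℝ) - 2 * (((0:ℕ):ℝ) + 1)) * (Real.pi / k) + x) / 2
          - q (((k:ℝ) - 2 * (((s:ℕ):ℝ) + 1)) * (Real.pi / k) + x) / 2 = _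
        have e3 : (k:ℝ) - 2 * (((0:ℕ):ℝ) + 1) = (k:ℝ) - 2 := by push_cast; ring
        have e4 : ((k:ℝ) - 2 * (((s:ℕ):ℝ) + 1)) * (Real.pi / k) + x = x := by
          rw [hkr, hs]; push_cast; ring
        rw [e3, e4]
    rw [S1, S2]
    ring
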